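/- arXiv:2507.20567 — 5 statements merged into one kernel-verified Lean document; each statement's English description precedes it below -/
import Mathlib

section
/- For sequences x, y in [0,1]^ℕ, if there exist finite permutations σ and τ such that x ≥ σ(y) pointwise and y ≥ τ(x) pointwise, then x and y are equal up to a finite permutation (i.e., there is a finite permutation ρ with ρ(x) = y). -/
def IsFinPerm (σ : ℕ → ℕ) : Prop :=
  Function.Bijective σ ∧ {n | σ n ≠ n}.Finite

/-- Every point is periodic under a finite permutation. -/
lemma exists_iterate_eq (π : ℕ → ℕ) (h : IsFinPerm π) (n : ℕ) :
    ∃ k > 0, π^[k] n = n := by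
  have hS : (insert n {m | π m ≠ m}).Finite := h.2.insert n
  have hmem : ∀ i, π^[i] n ∈ insert n {m | π m ≠ m} := by
    intro i
    induction i with
    | zero => simp
    | succ i ih =>
      rw [Function.iterate_succ_apply']
      by_cases hc : π (π^[i] n) = π^[i] n
      · rw [hc]; exact ih
      · exact Set.mem_insert_of_mem _ (fun heq => hc (h.1.injective heq))
  have : ¬ Function.Injective (fun i => π^[i] n) := by
    intro hinj
    exact Set.Infinite.mono (Set.range_subset_iff.2 hmem)
      (Set.infinite_range_of_injective hinj) hS
  rw [Function.not_injective_iff] at this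
  obtain ⟨i, j, hij, hne⟩ := this
  wlog hlt : i < j generalizing i j
  · exact this j i hij.symm hne.symm (by omega)
  refine ⟨j - i, by omega, ?_⟩
  have hinj : Function.Injective (π^[i]) := h.1.injective.iterate i
  apply hinj
  rw [← Function.iterate_add_apply]
  have hji : i + (j - i) = j := by omega
  rw [hji]
  exact hij.symm

/-- If `x ≥ σ(y)` and `y ≥ τ(x)` pointwise for finite permutations `σ, τ`, then `x` and `y`
are equal up to a finite permutation. -/
theorem equiv_of_mutual_domination (x y : ℕ → Set.Icc (0:ℝ) 1)
    (σ τ : ℕ → ℕ) (hσ : IsFinPerm σ) (hτ : IsFinPerm τ)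
    (h₁ : ∀ n, ((y ∘ σ) n : ℝ) ≤ x n) (h₂ : ∀ n, ((x ∘ τ) n : ℝ) ≤ y n) :
    ∃ ρ : ℕ → ℕ, IsFinPerm ρ ∧ x ∘ ρ = y := by
  set π : ℕ → ℕ := τ ∘ σ with hπdef
  have hπ : IsFinPerm π := by
    constructor
    · exact hτ.1.comp hσ.1
    · apply Set.Finite.subset (hσ.2.union (hτ.2.preimage hσ.1.injective.injOn))
      intro n hn
      by_cases hc : σ n = n
      · right
        simp only [Set.mem_preimage, Set.mem_setOf_eq]
        simpa [hπdef, Function.comp, hc] using hn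
      · exact Or.inl hc
  -- key pointwise inequality for f n = x n
  have hdec : ∀ n, ((x (π n) : ℝ)) ≤ x n :=
    fun n => le_trans (h₂ (σ n)) (h₁ n)
  have hiter : ∀ n i j, i ≤ j → ((x (π^[j] n) : ℝ)) ≤ x (π^[i] n) := by
    intro n i j hij
    induction j with
    | zero => simp_all
    | succ j ih =>
      rcases Nat.lt_or_ge i (j+1) with h | h
      · calc ((x (π^[j+1] n) : ℝ)) ≤ x (π^[j] n) := by
              rw [Function.iterate_succ_apply']; exact hdec _
          _ ≤ x (π^[i] n) := ih (by omega)
      · have : i = j + 1 := by omega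
        subst this; rfl
  have hfix : ∀ n, ((x (π n) : ℝ)) = x n := by
    intro n
    obtain ⟨k, hk, hkn⟩ := exists_iterate_eq π hπ n
    refine le_antisymm (hdec n) ?_
    have := hiter n 1 k hk
    simpa [hkn] using this
  have hkey : ∀ n, ((y (σ n) : ℝ)) = x n := by
    intro n
    refine le_antisymm (h₁ n) ?_
    have := h₂ (σ n)
    have hx : ((x (τ (σ n)) : ℝ)) = x n := hfix n
    simp only [Function.comp] at this
    linarith
  -- ρ := σ⁻¹
  let e : ℕ ≃ ℕ := Equiv.ofBijective σ hσ.1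
  refine ⟨e.symm, ⟨e.symm.bijective, ?_⟩, ?_⟩
  · apply Set.Finite.subset hσ.2
    intro n hn
    simp only [Set.mem_setOf_eq] at hn ⊢
    intro hc
    apply hn
    have : e.symm (σ n) = n := e.symm_apply_apply n
    rw [hc] at this
    exact this
  · funext n
    apply Subtype.ext
    have h1 : σ (e.symm n) = n := e.apply_symm_apply n
    have := hkey (e.symm n)
    rw [h1] at this
    exact this.symm
end

section
/- There exists a complete (total) and transitive relation ⪰ on X = {0,1}^ℕ such that: (i) strict Pareto holds: if x(n) ≥ y(n) for all n and x ≠ y, then x ≻ y; (ii) intergenerational equity holds: x ∼ σ(x) for every x ∈ X and every finite permutation σ; and (iii) the set of pairs (x,y) that are not strictly comparable (i.e., x ∼ y) is exactly the set of pairs equal up to a finite permutation. -/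
namespace EqPareto

lemma isFinPerm_id : IsFinPerm id :=
  ⟨Function.bijective_id, by simp⟩

lemma isFinPerm_comp {σ τ : ℕ → ℕ} (hσ : IsFinPerm σ) (hτ : IsFinPerm τ) :
    IsFinPerm (σ ∘ τ) := by
  refine ⟨hσ.1.comp hτ.1, Set.Finite.subset (hσ.2.union hτ.2) ?_⟩
  intro n hn
  by_contra h
  simp only [Set.mem_union, Set.mem_setOf_eq, not_or, not_not] at h
  exact hn (by simp [Function.comp, h.2, h.1])

lemma isFinPerm_inv {σ : ℕ → ℕ} (hσ : IsFinPerm σ) :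
    ∃ τ : ℕ → ℕ, IsFinPerm τ ∧ σ ∘ τ = id ∧ τ ∘ σ = id := by
  let e := Equiv.ofBijective σ hσ.1
  refine ⟨e.symm, ⟨e.symm.bijective, Set.Finite.subset hσ.2 ?_⟩, ?_, ?_⟩
  · intro n hn
    simp only [Set.mem_setOf_eq] at hn ⊢
    intro hfix
    apply hn
    have : σ (e.symm n) = n := e.apply_symm_apply n
    have : σ (e.symm n) = σ n := by rw [this, hfix]
    exact hσ.1.1 this
  · funext n; exact e.apply_symm_apply n
  · funext n; exact e.symm_apply_apply n

/-- Equal up to a finite permutation. -/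
def E (x y : ℕ → Bool) : Prop := ∃ σ : ℕ → ℕ, IsFinPerm σ ∧ x ∘ σ = y

lemma E_refl (x : ℕ → Bool) : E x x := ⟨id, isFinPerm_id, rfl⟩

lemma E_symm {x y : ℕ → Bool} (h : E x y) : E y x := by
  obtain ⟨σ, hσ, hxy⟩ := h
  obtain ⟨τ, hτ, hστ, _⟩ := isFinPerm_inv hσ
  exact ⟨τ, hτ, by rw [← hxy]; change x ∘ (σ ∘ τ) = x; rw [hστ]; rfl⟩

lemma E_trans {x y z : ℕ → Bool} (h1 : E x y) (h2 : E y z) : E x z := by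
  obtain ⟨σ, hσ, hxy⟩ := h1
  obtain ⟨τ, hτ, hyz⟩ := h2
  exact ⟨σ ∘ τ, isFinPerm_comp hσ hτ, by rw [← hyz, ← hxy]; rfl⟩

instance setoidE : Setoid (ℕ → Bool) := ⟨E, E_refl, E_symm, E_trans⟩

lemma bool_toNat_le {a b : Bool} (h : a ≤ b) : a.toNat ≤ b.toNat := by
  revert h; cases a <;> cases b <;> decide

lemma bool_toNat_inj {a b : Bool} (h : a.toNat = b.toNat) : a = b := by
  revert h; cases a <;> cases b <;> decide

/-- Key lemma: a finite permutation cannot pointwise decrease a sequence without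
being pointwise equal. -/
lemma finperm_le_eq (x : ℕ → Bool) {π : ℕ → ℕ} (hπ : IsFinPerm π)
    (h : ∀ n, x (π n) ≤ x n) : ∀ n, x (π n) = x n := by
  obtain ⟨hbij, hfin⟩ := hπ
  set S : Finset ℕ := hfin.toFinset with hS
  have hmem : ∀ n, n ∈ S ↔ π n ≠ n := by intro n; simp [hS]
  have hmaps : ∀ n ∈ S, π n ∈ S := by
    intro n hn
    rw [hmem] at hn ⊢
    intro hfix
    exact hn (hbij.1 (show π (π n) = π n by rw [hfix]))
  have himg : Finset.image π S = S := by
    apply Finset.eq_of_subset_of_card_le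
    · intro m hm
      obtain ⟨n, hn, rfl⟩ := Finset.mem_image.1 hm
      exact hmaps n hn
    · rw [Finset.card_image_of_injective _ hbij.1]
  have hsum : ∑ n ∈ S, (x (π n)).toNat = ∑ n ∈ S, (x n).toNat := by
    conv_rhs => rw [← himg]
    rw [Finset.sum_image (fun a _ b _ hab => hbij.1 hab)]
  have heq : ∀ n ∈ S, (x (π n)).toNat = (x n).toNat :=
    (Finset.sum_eq_sum_iff_of_le (fun n _ => bool_toNat_le (h n))).1 hsum
  intro n
  by_cases hn : n ∈ S
  · exact bool_toNat_inj (heq n hn)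
  · rw [hmem] at hn; push_neg at hn; rw [hn]

/-- Strict pointwise dominance. -/
def Dom (x y : ℕ → Bool) : Prop := (∀ n, y n ≤ x n) ∧ x ≠ y

abbrev Q := Quotient setoidE

/-- Strict preference on the quotient. -/
def Sq (a b : Q) : Prop := ∃ x y : ℕ → Bool, ⟦x⟧ = a ∧ ⟦y⟧ = b ∧ Dom x y

lemma dom_comp {x y : ℕ → Bool} (h : Dom x y) {σ : ℕ → ℕ} (hσ : IsFinPerm σ) :
    Dom (x ∘ σ) (y ∘ σ) := by
  refine ⟨fun n => h.1 (σ n), fun hc => h.2 ?_⟩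
  funext m
  obtain ⟨n, rfl⟩ := hσ.1.2 m
  exact congrFun hc n

lemma Sq_trans {a b c : Q} (h1 : Sq a b) (h2 : Sq b c) : Sq a c := by
  obtain ⟨x, y, rfl, hy, hxy⟩ := h1
  obtain ⟨y', z, hy', rfl, hyz⟩ := h2
  have hE : E y y' := Quotient.exact (hy.trans hy'.symm)
  obtain ⟨σ, hσ, hEeq⟩ := hE
  have hd : Dom (x ∘ σ) y' := by
    have := dom_comp hxy hσ
    rwa [hEeq] at this
  refine ⟨x ∘ σ, z, Quotient.sound (E_symm ⟨σ, hσ, rfl⟩), rfl, ?_, ?_⟩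
  · intro n; exact le_trans (hyz.1 n) (hd.1 n)
  · intro hc
    apply hyz.2
    funext n
    refine le_antisymm ?_ (hyz.1 n)
    have := hd.1 n
    rw [hc] at this
    exact this

lemma Sq_irrefl (a : Q) : ¬ Sq a a := by
  rintro ⟨x, y, rfl, hy, hd⟩
  have hE : E x y := Quotient.exact hy.symm
  obtain ⟨σ, hσ, rfl⟩ := hE
  have : ∀ n, x (σ n) ≤ x n := hd.1
  exact hd.2 (funext fun n => (finperm_le_eq x hσ this n).symm)

/-- The base partial order on the quotient. -/
def Rq (a b : Q) : Prop := a = b ∨ Sq a b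

instance : IsPartialOrder Q Rq where
  refl a := Or.inl rfl
  trans a b c h1 h2 := by
    rcases h1 with rfl | h1
    · exact h2
    rcases h2 with rfl | h2
    · exact Or.inr h1
    · exact Or.inr (Sq_trans h1 h2)
  antisymm a b h1 h2 := by
    rcases h1 with rfl | h1
    · rfl
    rcases h2 with rfl | h2
    · rfl
    · exact absurd (Sq_trans h1 h2) (Sq_irrefl a)

end EqPareto

open EqPareto in
/-- There is a complete (total) and transitive relation on `{0,1}^ℕ` satisfying strict Pareto
and intergenerational equity, whose symmetric part (the pairs that are not strictly
comparable) is exactly the relation "equal up to a finite permutation". -/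
theorem exists_equitable_paretian_order_bool :
    ∃ R : (ℕ → Bool) → (ℕ → Bool) → Prop,
      Total R ∧ Transitive R ∧
      (∀ x y : ℕ → Bool, (∀ n, y n ≤ x n) → x ≠ y → (R x y ∧ ¬ R y x)) ∧
      (∀ (x : ℕ → Bool) (σ : ℕ → ℕ), IsFinPerm σ → (R x (x ∘ σ) ∧ R (x ∘ σ) x)) ∧
      (∀ x y : ℕ → Bool, (R x y ∧ R y x) ↔ ∃ σ : ℕ → ℕ, IsFinPerm σ ∧ x ∘ σ = y) := by
  obtain ⟨s, hs, hrs⟩ := extend_partialOrder Rq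
  refine ⟨fun x y => s ⟦x⟧ ⟦y⟧, ?_, ?_, ?_, ?_, ?_⟩
  · intro x y
    exact hs.total ⟦x⟧ ⟦y⟧
  · intro x y z h1 h2
    exact hs.trans _ _ _ h1 h2
  · intro x y hle hne
    have hSq : Sq ⟦x⟧ ⟦y⟧ := ⟨x, y, rfl, rfl, hle, hne⟩
    refine ⟨hrs _ _ (Or.inr hSq), fun hyx => ?_⟩
    have hxy : s ⟦x⟧ ⟦y⟧ := hrs _ _ (Or.inr hSq)
    have : (⟦x⟧ : Q) = ⟦y⟧ := hs.antisymm _ _ hxy hyx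
    rw [this] at hSq
    exact Sq_irrefl _ hSq
  · intro x σ hσ
    have : (⟦x⟧ : Q) = ⟦x ∘ σ⟧ := Quotient.sound ⟨σ, hσ, rfl⟩
    constructor
    · show s ⟦x⟧ ⟦x ∘ σ⟧; rw [this]; exact hs.refl _
    · show s ⟦x ∘ σ⟧ ⟦x⟧; rw [← this]; exact hs.refl _
  · intro x y
    constructor
    · rintro ⟨h1, h2⟩
      have : (⟦x⟧ : Q) = ⟦y⟧ := hs.antisymm _ _ h1 h2
      exact Quotient.exact this
    · rintro ⟨σ, hσ, hxy⟩
      have : (⟦x⟧ : Q) = ⟦y⟧ := Quotient.sound ⟨σ, hσ, hxy⟩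
      refine ⟨?_, ?_⟩ <;> · show s _ _; rw [this]; exact hs.refl _
end

section
/- There exists a complete and transitive relation ⪰ on X = {0,1}^ℕ satisfying strict Pareto and intergenerational equity, such that the set {(x,y) ∈ X × X : neither x ≻ y nor y ≻ x} is Borel measurable with measure zero under the product of the fair coin-flipping measure with itself. -/
open MeasureTheory ENNReal

def IsCoinMeasure (μ : Measure (ℕ → Bool)) : Prop :=
  ∀ (n : ℕ) (y : ℕ → Bool), μ {x | ∀ i < n, x i = y i} = (1 / 2 : ℝ≥0∞) ^ n

-- basic closure lemmas
lemma isFinPerm_id : IsFinPerm id := ⟨Function.bijective_id, by simp⟩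

lemma IsFinPerm.comp {σ τ : ℕ → ℕ} (hσ : IsFinPerm σ) (hτ : IsFinPerm τ) :
    IsFinPerm (σ ∘ τ) := by
  refine ⟨hσ.1.comp hτ.1, (hσ.2.union hτ.2).subset ?_⟩
  intro n hn
  by_contra h
  simp only [Set.mem_union, Set.mem_setOf_eq, not_or, not_not] at h
  exact hn (by simp [Function.comp, h.2, h.1])

lemma IsFinPerm.symm {σ : ℕ → ℕ} (hσ : IsFinPerm σ) :
    IsFinPerm ((Equiv.ofBijective σ hσ.1).symm) := by
  refine ⟨(Equiv.ofBijective σ hσ.1).symm.bijective, hσ.2.subset ?_⟩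
  intro n hn
  simp only [Set.mem_setOf_eq] at hn ⊢
  intro h
  apply hn
  rw [Equiv.symm_apply_eq]
  exact h.symm

-- if x ≤ x ∘ σ pointwise for a finite permutation, then equality
lemma finperm_fixed {σ : ℕ → ℕ} (hσ : IsFinPerm σ) (x : ℕ → Bool)
    (h : ∀ n, x n ≤ x (σ n)) : ∀ n, x (σ n) = x n := by
  classical
  set S := hσ.2.toFinset with hS
  have hmem : ∀ n ∈ S, σ n ∈ S := by
    intro n hn
    simp only [hS, Set.Finite.mem_toFinset, Set.mem_setOf_eq] at hn ⊢
    intro hss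
    exact hn (hσ.1.1 (show σ n = σ (σ n) from hss.symm)).symm
  have himg : S.image σ = S := by
    apply Finset.eq_of_subset_of_card_le
    · intro m hm
      obtain ⟨n, hn, rfl⟩ := Finset.mem_image.mp hm
      exact hmem n hn
    · rw [Finset.card_image_of_injective _ hσ.1.1]
  have hsum : ∑ n ∈ S, (x (σ n)).toNat = ∑ n ∈ S, (x n).toNat := by
    have h2 := Finset.sum_image (s := S) (g := σ) (f := fun m => (x m).toNat)
      (fun a _ b _ hab => hσ.1.1 hab)
    rw [himg] at h2
    exact h2.symm
  have hle : ∀ n ∈ S, (x n).toNat ≤ (x (σ n)).toNat := by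
    intro n _
    have := h n
    revert this
    cases x n <;> cases x (σ n) <;> simp
  have heq := (Finset.sum_eq_sum_iff_of_le hle).mp hsum.symm
  intro n
  by_cases hn : n ∈ S
  · have := (heq n hn).symm
    revert this
    cases x n <;> cases x (σ n) <;> simp
  · simp only [hS, Set.Finite.mem_toFinset, Set.mem_setOf_eq, not_not] at hn
    rw [hn]

def FPEquiv (x y : ℕ → Bool) : Prop := ∃ σ, IsFinPerm σ ∧ x = y ∘ σ

lemma fpe_refl (x : ℕ → Bool) : FPEquiv x x := ⟨id, isFinPerm_id, rfl⟩

lemma fpe_symm {x y : ℕ → Bool} (h : FPEquiv x y) : FPEquiv y x := by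
  obtain ⟨σ, hσ, rfl⟩ := h
  refine ⟨(Equiv.ofBijective σ hσ.1).symm, hσ.symm, ?_⟩
  funext n
  simp only [Function.comp_apply]
  congr 1
  exact ((Equiv.ofBijective σ hσ.1).apply_symm_apply n).symm

lemma fpe_trans {x y z : ℕ → Bool} (h1 : FPEquiv x y) (h2 : FPEquiv y z) : FPEquiv x z := by
  obtain ⟨σ, hσ, rfl⟩ := h1
  obtain ⟨τ, hτ, rfl⟩ := h2
  exact ⟨τ ∘ σ, hτ.comp hσ, rfl⟩

def preR (x y : ℕ → Bool) : Prop := ∃ σ, IsFinPerm σ ∧ ∀ n, y n ≤ x (σ n)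

lemma preR_refl (x : ℕ → Bool) : preR x x := ⟨id, isFinPerm_id, fun n => le_refl _⟩

lemma preR_trans {x y z : ℕ → Bool} (h1 : preR x y) (h2 : preR y z) : preR x z := by
  obtain ⟨σ, hσ, h1⟩ := h1
  obtain ⟨τ, hτ, h2⟩ := h2
  exact ⟨σ ∘ τ, hσ.comp hτ, fun n => le_trans (h2 n) (h1 (τ n))⟩

lemma preR_antisymm {x y : ℕ → Bool} (h1 : preR x y) (h2 : preR y x) : FPEquiv x y := by
  obtain ⟨σ, hσ, h1⟩ := h1
  obtain ⟨τ, hτ, h2⟩ := h2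
  have hρ : IsFinPerm (σ ∘ τ) := hσ.comp hτ
  have hfix : ∀ n, x ((σ ∘ τ) n) = x n :=
    finperm_fixed hρ x (fun n => le_trans (h2 n) (h1 (τ n)))
  refine ⟨τ, hτ, funext fun n => ?_⟩
  have := hfix n
  exact le_antisymm (by rw [← this]; exact h1 (τ n)) (h2 n) |>.symm

lemma fpe_preR {x y : ℕ → Bool} (h : FPEquiv x y) : preR x y := by
  obtain ⟨σ, hσ, h⟩ := fpe_symm h
  exact ⟨σ, hσ, fun n => le_of_eq (congrFun h n)⟩

def fpSetoid : Setoid (ℕ → Bool) := ⟨FPEquiv, ⟨fpe_refl, fpe_symm, fpe_trans⟩⟩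

abbrev QB := Quotient fpSetoid

def R0 : QB → QB → Prop :=
  Quotient.lift₂ preR (by
    intro a b c d hac hbd
    have hac' : FPEquiv a c := hac
    have hbd' : FPEquiv b d := hbd
    apply propext
    constructor
    · intro h
      exact preR_trans (preR_trans (fpe_preR (fpe_symm hac')) h) (fpe_preR hbd')
    · intro h
      exact preR_trans (preR_trans (fpe_preR hac') h) (fpe_preR (fpe_symm hbd')))

instance : IsPartialOrder QB R0 where
  refl := fun a => Quotient.inductionOn a preR_refl
  trans := fun a b c => Quotient.inductionOn₃ a b c (fun x y z h1 h2 => preR_trans h1 h2)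
  antisymm := fun a b => Quotient.inductionOn₂ a b
    (fun x y h1 h2 => Quotient.sound (preR_antisymm h1 h2))

lemma countable_finperms : {σ : ℕ → ℕ | IsFinPerm σ}.Countable := by
  have hsub : {σ : ℕ → ℕ | IsFinPerm σ} ⊆
      ⋃ F : Finset ℕ, {σ : ℕ → ℕ | ∀ n ∉ F, σ n = n} := by
    intro σ hσ
    refine Set.mem_iUnion.mpr ⟨hσ.2.toFinset, fun n hn => ?_⟩
    simpa using fun h => hn (hσ.2.mem_toFinset.mpr h)
  refine Set.Countable.mono hsub (Set.countable_iUnion fun F => ?_)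
  rw [← Set.countable_coe_iff]
  have hinj : Function.Injective
      (fun σ : {σ : ℕ → ℕ // ∀ n ∉ F, σ n = n} => (fun n : F => σ.1 n.1)) := by
    intro σ τ h
    ext n
    by_cases hn : n ∈ F
    · exact congrFun h ⟨n, hn⟩
    · rw [σ.2 n hn, τ.2 n hn]
  exact hinj.countable

lemma coin_singleton_null {μ : Measure (ℕ → Bool)} (h : IsCoinMeasure μ) (y : ℕ → Bool) :
    μ {y} = 0 := by
  have hle : ∀ n, μ {y} ≤ (1 / 2 : ℝ≥0∞) ^ n := by
    intro n
    rw [← h n y]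
    apply measure_mono
    intro z hz
    simp only [Set.mem_singleton_iff] at hz
    subst hz
    intro i _
    rfl
  have htend : Filter.Tendsto (fun n => (1 / 2 : ℝ≥0∞) ^ n) Filter.atTop (nhds 0) :=
    ENNReal.tendsto_pow_atTop_nhds_zero_of_lt_one (by norm_num)
  exact nonpos_iff_eq_zero.mp (ge_of_tendsto' htend hle)

lemma graph_measurable (σ : ℕ → ℕ) :
    MeasurableSet {p : (ℕ → Bool) × (ℕ → Bool) | p.1 = p.2 ∘ σ} := by
  have : {p : (ℕ → Bool) × (ℕ → Bool) | p.1 = p.2 ∘ σ} =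
      ⋂ n, {p : (ℕ → Bool) × (ℕ → Bool) | p.1 n = p.2 (σ n)} := by
    ext p
    simp [funext_iff, Function.comp]
  rw [this]
  refine MeasurableSet.iInter fun n => ?_
  exact measurableSet_eq_fun (measurable_fst.eval) (measurable_snd.eval)

lemma graph_null {μ : Measure (ℕ → Bool)} (h : IsCoinMeasure μ) [SFinite μ]
    {σ : ℕ → ℕ} (hσ : IsFinPerm σ) :
    (μ.prod μ) {p : (ℕ → Bool) × (ℕ → Bool) | p.1 = p.2 ∘ σ} = 0 := by
  rw [Measure.prod_apply (graph_measurable σ)]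
  have : ∀ x : ℕ → Bool,
      (Prod.mk x ⁻¹' {p : (ℕ → Bool) × (ℕ → Bool) | p.1 = p.2 ∘ σ}) =
      {fun n => x ((Equiv.ofBijective σ hσ.1).symm n)} := by
    intro x
    ext y
    simp only [Set.mem_preimage, Set.mem_setOf_eq, Set.mem_singleton_iff]
    constructor
    · intro hxy
      funext n
      rw [hxy]
      simp only [Function.comp_apply]
      congr 1
      exact ((Equiv.ofBijective σ hσ.1).apply_symm_apply n).symm
    · intro hy
      subst hy
      funext n
      simp only [Function.comp_apply]
      congr 1
      exact ((Equiv.ofBijective σ hσ.1).symm_apply_apply n).symm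
  have h0 : ∀ x : ℕ → Bool,
      μ (Prod.mk x ⁻¹' {p : (ℕ → Bool) × (ℕ → Bool) | p.1 = p.2 ∘ σ}) = 0 := by
    intro x
    rw [this x]
    exact coin_singleton_null h _
  simp only [h0]
  exact lintegral_zero

/-- There is a complete and transitive relation on `{0,1}^ℕ` satisfying strict Pareto and
intergenerational equity such that the set of pairs that are not strictly comparable is
Borel measurable with measure zero under the product of the fair coin-flipping measure
with itself. -/
theorem exists_decisive_equitable_order_bool :
    ∃ R : (ℕ → Bool) → (ℕ → Bool) → Prop,
      Total R ∧ Transitive R ∧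
      (∀ x y : ℕ → Bool, (∀ n, y n ≤ x n) → x ≠ y → (R x y ∧ ¬ R y x)) ∧
      (∀ (x : ℕ → Bool) (σ : ℕ → ℕ), IsFinPerm σ → (R x (x ∘ σ) ∧ R (x ∘ σ) x)) ∧
      MeasurableSet {p : (ℕ → Bool) × (ℕ → Bool) |
          ¬ (R p.1 p.2 ∧ ¬ R p.2 p.1) ∧ ¬ (R p.2 p.1 ∧ ¬ R p.1 p.2)} ∧
      ∀ μ : Measure (ℕ → Bool), IsCoinMeasure μ →
        (μ.prod μ) {p : (ℕ → Bool) × (ℕ → Bool) |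
          ¬ (R p.1 p.2 ∧ ¬ R p.2 p.1) ∧ ¬ (R p.2 p.1 ∧ ¬ R p.1 p.2)} = 0 := by
  obtain ⟨s, hs, hrs⟩ := extend_partialOrder R0
  haveI : IsLinearOrder QB s := hs
  set R : (ℕ → Bool) → (ℕ → Bool) → Prop :=
    fun x y => s (Quotient.mk fpSetoid x) (Quotient.mk fpSetoid y) with hR
  -- indifference characterization
  have hchar : ∀ x y : ℕ → Bool,
      (¬ (R x y ∧ ¬ R y x) ∧ ¬ (R y x ∧ ¬ R x y)) ↔ FPEquiv x y := by
    intro x y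
    constructor
    · rintro ⟨h1, h2⟩
      have htot := total_of s (Quotient.mk fpSetoid x) (Quotient.mk fpSetoid y)
      have hboth : R x y ∧ R y x := by
        rcases htot with h | h
        · exact ⟨h, by by_contra hc; exact h1 ⟨h, hc⟩⟩
        · exact ⟨by by_contra hc; exact h2 ⟨h, hc⟩, h⟩
      have heq : Quotient.mk fpSetoid x = Quotient.mk fpSetoid y :=
        antisymm (r := s) hboth.1 hboth.2
      exact Quotient.exact heq
    · intro h
      have heq : Quotient.mk fpSetoid x = Quotient.mk fpSetoid y := Quotient.sound h
      have h1 : R x y := by show s _ _; rw [heq]; exact refl_of s _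
      have h2 : R y x := by show s _ _; rw [heq]; exact refl_of s _
      exact ⟨fun hc => hc.2 h2, fun hc => hc.2 h1⟩
  have hT : {p : (ℕ → Bool) × (ℕ → Bool) |
        ¬ (R p.1 p.2 ∧ ¬ R p.2 p.1) ∧ ¬ (R p.2 p.1 ∧ ¬ R p.1 p.2)} =
      ⋃ σ : {σ : ℕ → ℕ // IsFinPerm σ},
        {p : (ℕ → Bool) × (ℕ → Bool) | p.1 = p.2 ∘ σ.1} := by
    ext p
    simp only [Set.mem_setOf_eq, Set.mem_iUnion]
    rw [hchar p.1 p.2]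
    constructor
    · rintro ⟨σ, hσ, hp⟩
      exact ⟨⟨σ, hσ⟩, hp⟩
    · rintro ⟨⟨σ, hσ⟩, hp⟩
      exact ⟨σ, hσ, hp⟩
  haveI : Countable {σ : ℕ → ℕ // IsFinPerm σ} := countable_finperms.to_subtype
  refine ⟨R, ?_, ?_, ?_, ?_, ?_, ?_⟩
  · exact fun x y => total_of s _ _
  · exact fun x y z h1 h2 => trans_of s h1 h2
  · intro x y hle hne
    have hxy : R x y := hrs _ _ (show preR x y from ⟨id, isFinPerm_id, fun n => hle n⟩)
    refine ⟨hxy, fun hyx => ?_⟩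
    have heq : Quotient.mk fpSetoid x = Quotient.mk fpSetoid y :=
      antisymm (r := s) hxy hyx
    obtain ⟨σ, hσ, hxs⟩ : FPEquiv x y := Quotient.exact heq
    have hfix : ∀ n, y (σ n) = y n :=
      finperm_fixed hσ y (fun n => le_trans (hle n) (le_of_eq (congrFun hxs n)))
    apply hne
    funext n
    rw [congrFun hxs n, Function.comp_apply, hfix n]
  · intro x σ hσ
    have heq : Quotient.mk fpSetoid (x ∘ σ) = Quotient.mk fpSetoid x :=
      Quotient.sound (⟨σ, hσ, rfl⟩ : FPEquiv (x ∘ σ) x)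
    constructor
    · show s _ _
      rw [heq]
      exact refl_of s _
    · show s _ _
      rw [heq]
      exact refl_of s _
  · rw [hT]
    exact MeasurableSet.iUnion fun σ => graph_measurable σ.1
  · intro μ hμ
    haveI : IsFiniteMeasure μ := by
      constructor
      have h0 := hμ 0 (fun _ => true)
      rw [show {x : ℕ → Bool | ∀ i < 0, x i = true} = Set.univ from by ext x; simp,
        pow_zero] at h0
      rw [h0]
      exact one_lt_top
    rw [hT]
    exact measure_iUnion_null fun σ => graph_null hμ σ.2
end

section
/- Any complete and transitive relation on {0,1}^ℕ satisfying strict Pareto and intergenerational equity has symmetric part containing the relation 'equal up to a finite permutation'; moreover for the relation constructed via Svensson's method the symmetric part equals this relation, so each indifference class is countable. -/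
namespace SvenssonAux

lemma finPerm_id : IsFinPerm id := ⟨Function.bijective_id, by simp⟩

lemma finPerm_comp {σ τ : ℕ → ℕ} (hσ : IsFinPerm σ) (hτ : IsFinPerm τ) :
    IsFinPerm (σ ∘ τ) := by
  refine ⟨hσ.1.comp hτ.1, (hσ.2.union hτ.2).subset ?_⟩
  intro n hn
  by_contra h
  simp only [Set.mem_union, Set.mem_setOf_eq, not_or, not_not] at h
  exact hn (by simp [Function.comp, h.2, h.1])

lemma finPerm_inv {σ : ℕ → ℕ} (hσ : IsFinPerm σ) :
    ∃ τ : ℕ → ℕ, IsFinPerm τ ∧ (∀ n, σ (τ n) = n) ∧ (∀ n, τ (σ n) = n) := by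
  let e := Equiv.ofBijective σ hσ.1
  have h1 : ∀ n, σ (e.symm n) = n := fun n => e.apply_symm_apply n
  have h2 : ∀ n, e.symm (σ n) = n := fun n => e.symm_apply_apply n
  refine ⟨e.symm, ⟨e.symm.bijective, ?_⟩, h1, h2⟩
  have : {n | e.symm n ≠ n} = {n | σ n ≠ n} := by
    ext n
    simp only [Set.mem_setOf_eq]
    constructor
    · intro h hc
      apply h
      conv_lhs => rw [← hc]
      exact h2 n
    · intro h hc
      have h3 := congrArg σ hc
      rw [h1 n] at h3
      exact h h3.symm
  rw [this]; exact hσ.2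

/-- Key lemma: if a finite permutation pointwise improves `x`, it leaves `x` unchanged. -/
lemma eq_of_le_comp {x : ℕ → Bool} {σ : ℕ → ℕ} (hσ : IsFinPerm σ)
    (hle : ∀ n, x n ≤ x (σ n)) : ∀ n, x n = x (σ n) := by
  classical
  set S : Finset ℕ := hσ.2.toFinset with hS
  have hmem : ∀ n, n ∈ S ↔ σ n ≠ n := by intro n; simp [hS]
  have hmaps : ∀ n ∈ S, σ n ∈ S := by
    intro n hn
    rw [hmem] at hn ⊢
    intro h
    exact hn (hσ.1.1 h)
  have hsum : ∑ n ∈ S, (x (σ n)).toNat = ∑ n ∈ S, (x n).toNat := by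
    refine Finset.sum_bij (fun n _ => σ n) hmaps ?_ ?_ ?_
    · intro a _ b _ h; exact hσ.1.1 h
    · intro m hm
      obtain ⟨a, ha⟩ := hσ.1.2 m
      refine ⟨a, ?_, ha⟩
      rw [hmem] at hm ⊢
      intro h
      apply hm
      rw [← ha, h]
      exact h
    · intro a _; rfl
  have hle' : ∀ n ∈ S, (x n).toNat ≤ (x (σ n)).toNat := by
    intro n _
    have h := hle n
    revert h
    cases x n <;> cases x (σ n) <;> decide
  have heq : ∀ n ∈ S, (x n).toNat = (x (σ n)).toNat :=
    (Finset.sum_eq_sum_iff_of_le hle').mp hsum.symm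
  intro n
  by_cases hn : n ∈ S
  · have h := heq n hn
    revert h
    cases x n <;> cases x (σ n) <;> decide
  · rw [hmem] at hn
    push_neg at hn
    rw [hn]

/-- The equivalence: equal up to a finite permutation. -/
def E (x y : ℕ → Bool) : Prop := ∃ σ : ℕ → ℕ, IsFinPerm σ ∧ x ∘ σ = y

lemma E_refl (x : ℕ → Bool) : E x x := ⟨id, finPerm_id, rfl⟩

lemma E_symm {x y : ℕ → Bool} (h : E x y) : E y x := by
  obtain ⟨σ, hσ, hxy⟩ := h
  obtain ⟨τ, hτ, hst, hts⟩ := finPerm_inv hσ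
  refine ⟨τ, hτ, ?_⟩
  funext n
  rw [← hxy]
  simp [Function.comp, hst]

lemma E_trans {x y z : ℕ → Bool} (h1 : E x y) (h2 : E y z) : E x z := by
  obtain ⟨σ, hσ, hxy⟩ := h1
  obtain ⟨τ, hτ, hyz⟩ := h2
  exact ⟨σ ∘ τ, finPerm_comp hσ hτ, by rw [← hyz, ← hxy]; rfl⟩

/-- The Svensson preorder: some finite permutation of `x` Pareto-dominates `y`. -/
def P (x y : ℕ → Bool) : Prop := ∃ σ : ℕ → ℕ, IsFinPerm σ ∧ ∀ n, y n ≤ x (σ n)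

lemma P_refl (x : ℕ → Bool) : P x x := ⟨id, finPerm_id, fun n => le_refl _⟩

lemma P_trans {x y z : ℕ → Bool} (h1 : P x y) (h2 : P y z) : P x z := by
  obtain ⟨σ, hσ, h1⟩ := h1
  obtain ⟨τ, hτ, h2⟩ := h2
  exact ⟨σ ∘ τ, finPerm_comp hσ hτ, fun n => le_trans (h2 n) (h1 (τ n))⟩

lemma E_P {x y : ℕ → Bool} (h : E x y) : P x y := by
  obtain ⟨σ, hσ, hxy⟩ := h
  exact ⟨σ, hσ, fun n => by rw [← hxy]; exact le_of_eq rfl⟩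

lemma P_antisymm {x y : ℕ → Bool} (h1 : P x y) (h2 : P y x) : E x y := by
  obtain ⟨σ, hσ, h1⟩ := h1
  obtain ⟨τ, hτ, h2⟩ := h2
  have hcomp : IsFinPerm (τ ∘ σ) := finPerm_comp hτ hσ
  have hle : ∀ n, y n ≤ y (τ (σ n)) := fun n => le_trans (h1 n) (h2 (σ n))
  have heq : ∀ n, y n = y (τ (σ n)) := eq_of_le_comp hcomp hle
  refine ⟨σ, hσ, funext fun n => ?_⟩
  have h3 : x (σ n) ≤ y (τ (σ n)) := h2 (σ n)
  rw [← heq n] at h3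
  exact le_antisymm h3 (h1 n)

instance setoidX : Setoid (ℕ → Bool) := ⟨E, E_refl, E_symm, E_trans⟩

lemma P_congr {x x' y y' : ℕ → Bool} (hx : E x x') (hy : E y y') (h : P x y) : P x' y' :=
  P_trans (P_trans (E_P (E_symm hx)) h) (E_P hy)

def P' : Quotient setoidX → Quotient setoidX → Prop :=
  Quotient.lift₂ P (fun _ _ _ _ hx hy =>
    propext ⟨fun h => P_congr hx hy h, fun h => P_congr (E_symm hx) (E_symm hy) h⟩)

instance : IsPartialOrder (Quotient setoidX) P' where
  refl q := by induction q using Quotient.ind; exact P_refl _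
  trans a b c := by
    induction a using Quotient.ind
    induction b using Quotient.ind
    induction c using Quotient.ind
    exact P_trans
  antisymm a b := by
    induction a using Quotient.ind
    induction b using Quotient.ind
    intro h1 h2
    exact Quotient.sound (P_antisymm h1 h2)

/-- Countability of finite-permutation equivalence classes. -/
lemma countable_class (x : ℕ → Bool) : {y : ℕ → Bool | E x y}.Countable := by
  have hsub : {y : ℕ → Bool | E x y} ⊆ ⋃ k : ℕ, {y : ℕ → Bool | ∀ n, k ≤ n → y n = x n} := by
    intro y hy
    obtain ⟨σ, hσ, hxy⟩ := hy
    have hfin : {n | y n ≠ x n}.Finite := by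
      apply hσ.2.subset
      intro n hn
      simp only [Set.mem_setOf_eq] at hn ⊢
      intro h
      exact hn (by rw [← hxy]; simp [Function.comp, h])
    obtain ⟨k, hk⟩ := hfin.bddAbove
    refine Set.mem_iUnion.mpr ⟨k + 1, fun n hn => ?_⟩
    by_contra h
    have hnk : n ≤ k := hk (show n ∈ {n | y n ≠ x n} from h)
    omega
  refine (Set.countable_iUnion fun k => ?_).mono hsub
  have hinj : Set.InjOn (fun y : ℕ → Bool => fun i : Fin k => y i)
      {y : ℕ → Bool | ∀ n, k ≤ n → y n = x n} := by
    intro y1 h1 y2 h2 h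
    funext n
    by_cases hn : n < k
    · exact congrFun h ⟨n, hn⟩
    · rw [h1 n (by omega), h2 n (by omega)]
  exact (Set.Finite.of_finite_image (Set.toFinite _) hinj).countable

end SvenssonAux

open SvenssonAux in
/-- Any complete and transitive relation on `{0,1}^ℕ` satisfying strict Pareto and
intergenerational equity is indifferent between sequences equal up to a finite permutation;
moreover there exists such a relation (Svensson's construction) whose symmetric part is
exactly "equal up to a finite permutation", so all its indifference classes are countable. -/
theorem symmetric_part_contains_finPerm_and_svensson :
    (∀ R : (ℕ → Bool) → (ℕ → Bool) → Prop, Total R → Transitive R →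
      (∀ x y : ℕ → Bool, (∀ n, y n ≤ x n) → x ≠ y → (R x y ∧ ¬ R y x)) →
      (∀ (x : ℕ → Bool) (σ : ℕ → ℕ), IsFinPerm σ → (R x (x ∘ σ) ∧ R (x ∘ σ) x)) →
      ∀ x y : ℕ → Bool, (∃ σ : ℕ → ℕ, IsFinPerm σ ∧ x ∘ σ = y) → (R x y ∧ R y x)) ∧
    (∃ R : (ℕ → Bool) → (ℕ → Bool) → Prop, Total R ∧ Transitive R ∧
      (∀ x y : ℕ → Bool, (∀ n, y n ≤ x n) → x ≠ y → (R x y ∧ ¬ R y x)) ∧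
      (∀ (x : ℕ → Bool) (σ : ℕ → ℕ), IsFinPerm σ → (R x (x ∘ σ) ∧ R (x ∘ σ) x)) ∧
      (∀ x y : ℕ → Bool, (R x y ∧ R y x) ↔ ∃ σ : ℕ → ℕ, IsFinPerm σ ∧ x ∘ σ = y) ∧
      (∀ x : ℕ → Bool, {y : ℕ → Bool | R x y ∧ R y x}.Countable)) := by
  constructor
  · intro R _ _ _ hequity x y hxy
    obtain ⟨σ, hσ, hc⟩ := hxy
    have := hequity x σ hσ
    rw [hc] at this
    exact this
  · obtain ⟨s, hs, hsub⟩ := extend_partialOrder P'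
    refine ⟨fun x y => s ⟦x⟧ ⟦y⟧, ?_, ?_, ?_, ?_, ?_, ?_⟩
    · intro x y
      exact hs.total ⟦x⟧ ⟦y⟧
    · intro x y z h1 h2
      exact hs.trans _ _ _ h1 h2
    · intro x y hle hne
      constructor
      · exact hsub _ _ ⟨id, finPerm_id, hle⟩
      · intro hyx
        have hxy : s ⟦x⟧ ⟦y⟧ := hsub _ _ ⟨id, finPerm_id, hle⟩
        have : (⟦y⟧ : Quotient setoidX) = ⟦x⟧ := hs.antisymm _ _ hyx hxy
        obtain ⟨σ, hσ, hc⟩ := Quotient.exact this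
        -- y ∘ σ = x, with y ≤ x pointwise, so x ∘ ? ... derive x = y
        obtain ⟨τ, hτ, hst, hts⟩ := finPerm_inv hσ
        -- y (σ n) = x n, y n ≤ x n
        have hyn : ∀ n, y (σ n) = x n := fun n => congrFun hc n
        -- x n ≤ ? : y n ≤ x n = y (σ n), so y ≤ y ∘ σ
        have hle2 : ∀ n, y n ≤ y (σ n) := fun n => (hyn n) ▸ hle n
        have heq : ∀ n, y n = y (σ n) := eq_of_le_comp hσ hle2
        apply hne
        funext n
        rw [← hyn n, ← heq n]
    · intro x σ hσ
      have h1 : E x (x ∘ σ) := ⟨σ, hσ, rfl⟩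
      have h2 : (⟦x⟧ : Quotient setoidX) = ⟦x ∘ σ⟧ := Quotient.sound h1
      constructor
      · show s ⟦x⟧ ⟦x ∘ σ⟧; rw [h2]; exact hs.refl _
      · show s ⟦x ∘ σ⟧ ⟦x⟧; rw [h2]; exact hs.refl _
    · intro x y
      constructor
      · rintro ⟨h1, h2⟩
        have : (⟦x⟧ : Quotient setoidX) = ⟦y⟧ := hs.antisymm _ _ h1 h2
        exact Quotient.exact this
      · intro h
        have h2 : (⟦x⟧ : Quotient setoidX) = ⟦y⟧ := Quotient.sound h
        refine ⟨?_, ?_⟩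
        · show s ⟦x⟧ ⟦y⟧; rw [h2]; exact hs.refl _
        · show s ⟦y⟧ ⟦x⟧; rw [h2]; exact hs.refl _
    · intro x
      have : {y : ℕ → Bool | s ⟦x⟧ ⟦y⟧ ∧ s ⟦y⟧ ⟦x⟧} ⊆ {y | E x y} := by
        intro y ⟨h1, h2⟩
        exact Quotient.exact (hs.antisymm _ _ h1 h2)
      exact (countable_class x).mono this
end

section
/- For every Borel set S ⊆ ℝ there exists a complete and transitive relation on S^ℕ satisfying strict Pareto and intergenerational equity whose symmetric part equals the relation 'equal up to a finite permutation'. -/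
namespace FinPermAux

lemma isFinPerm_id : IsFinPerm id := by
  refine ⟨Function.bijective_id, ?_⟩
  convert Set.finite_empty
  simp

lemma isFinPerm_comp {σ τ : ℕ → ℕ} (hσ : IsFinPerm σ) (hτ : IsFinPerm τ) :
    IsFinPerm (σ ∘ τ) := by
  refine ⟨hσ.1.comp hτ.1, (hσ.2.union hτ.2).subset ?_⟩
  intro n hn
  simp only [Set.mem_union, Set.mem_setOf_eq]
  by_contra h
  push_neg at h
  exact hn (show σ (τ n) = n by rw [h.2, h.1])

lemma isFinPerm_inv {σ : ℕ → ℕ} (hσ : IsFinPerm σ) :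
    IsFinPerm ⇑(Equiv.ofBijective σ hσ.1).symm := by
  set e := Equiv.ofBijective σ hσ.1 with he
  refine ⟨e.symm.bijective, (hσ.2.image σ).subset ?_⟩
  intro n hn
  simp only [Set.mem_setOf_eq] at hn
  refine ⟨e.symm n, ?_, e.apply_symm_apply n⟩
  simp only [Set.mem_setOf_eq]
  intro h
  have h2 : σ (e.symm n) = n := e.apply_symm_apply n
  exact hn (h2.symm.trans h).symm

variable {S : Set ℝ}

/-- support maps into itself -/
lemma support_maps {σ : ℕ → ℕ} (hσ : IsFinPerm σ) {n : ℕ} (hn : σ n ≠ n) : σ (σ n) ≠ σ n := by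
  intro h
  exact hn (hσ.1.1 h)

/-- Key: a finite permutation that dominates pointwise must be equality. -/
lemma eq_of_finPerm_le {x y : ℕ → S} {σ : ℕ → ℕ} (hσ : IsFinPerm σ)
    (hxy : x ∘ σ = y) (hle : ∀ n, (y n : ℝ) ≤ x n) : x = y := by
  by_contra hne
  have hyx : ∀ n, (y n : ℝ) = x (σ n) := fun n =>
    congrArg Subtype.val (congrFun hxy.symm n)
  -- pick a point of strict inequality
  obtain ⟨m, hm⟩ : ∃ m, (y m : ℝ) < x m := by
    by_contra h
    push_neg at h
    apply hne
    funext n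
    exact Subtype.ext (le_antisymm (h n) (hle n))
  set F : Finset ℕ := hσ.2.toFinset with hF
  have hmemF : ∀ n, σ n ≠ n ↔ n ∈ F := by
    intro n; simp [hF, Set.Finite.mem_toFinset]
  have hmF : m ∈ F := by
    rw [← hmemF]
    intro h
    have := hyx m
    rw [h] at this
    exact absurd this (ne_of_lt hm)
  -- σ maps F into F
  have hσF : ∀ n ∈ F, σ n ∈ F := by
    intro n hn
    rw [← hmemF] at hn ⊢
    exact support_maps hσ hn
  set e := Equiv.ofBijective σ hσ.1 with he
  have hσsymmF : ∀ n ∈ F, e.symm n ∈ F := by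
    intro n hn
    rw [← hmemF] at hn ⊢
    intro h
    have h2 : σ (e.symm n) = n := e.apply_symm_apply n
    have h3 : e.symm n = n := (h2.symm.trans h).symm
    exact hn (by rw [← h3]; exact h)
  have hsum : ∑ n ∈ F, (x (σ n) : ℝ) = ∑ n ∈ F, (x n : ℝ) := by
    refine Finset.sum_nbij' σ (⇑e.symm) hσF hσsymmF ?_ ?_ ?_
    · intro a _; exact e.symm_apply_apply a
    · intro a _; exact e.apply_symm_apply a
    · intro a _; rfl
  have hlt : ∑ n ∈ F, (y n : ℝ) < ∑ n ∈ F, (x n : ℝ) :=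
    Finset.sum_lt_sum (fun n _ => hle n) ⟨m, hmF, hm⟩
  have heq : ∑ n ∈ F, (y n : ℝ) = ∑ n ∈ F, (x n : ℝ) := by
    rw [Finset.sum_congr rfl (fun n _ => hyx n), hsum]
  exact absurd heq (ne_of_lt hlt)

/-- equal up to a finite permutation -/
def E (x y : ℕ → S) : Prop := ∃ σ : ℕ → ℕ, IsFinPerm σ ∧ x ∘ σ = y

lemma E_refl (x : ℕ → S) : E x x := ⟨id, isFinPerm_id, rfl⟩

lemma E_symm {x y : ℕ → S} (h : E x y) : E y x := by
  obtain ⟨σ, hσ, hxy⟩ := h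
  set e := Equiv.ofBijective σ hσ.1 with he
  refine ⟨⇑e.symm, isFinPerm_inv hσ, ?_⟩
  funext n
  show y (e.symm n) = x n
  rw [← hxy]
  show x (σ (e.symm n)) = x n
  rw [show σ (e.symm n) = n from e.apply_symm_apply n]

lemma E_trans {x y z : ℕ → S} (h1 : E x y) (h2 : E y z) : E x z := by
  obtain ⟨σ, hσ, hxy⟩ := h1
  obtain ⟨τ, hτ, hyz⟩ := h2
  exact ⟨σ ∘ τ, isFinPerm_comp hσ hτ, by rw [← Function.comp_assoc, hxy, hyz]⟩

/-- setoid -/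
def ES (S : Set ℝ) : Setoid (ℕ → S) := ⟨E, E_refl, E_symm, E_trans⟩

/-- strict Pareto dominance on sequences -/
def D (x y : ℕ → S) : Prop := (∀ n, (y n : ℝ) ≤ x n) ∧ x ≠ y

/-- dominance on classes -/
def Dom (a b : Quotient (ES S)) : Prop :=
  ∃ x y : ℕ → S, Quotient.mk (ES S) x = a ∧ Quotient.mk (ES S) y = b ∧ D x y

lemma Dom_irrefl (a : Quotient (ES S)) : ¬ Dom a a := by
  rintro ⟨x, y, hx, hy, hle, hne⟩
  rw [← hy] at hx
  have hE : E x y := Quotient.exact hx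
  obtain ⟨σ, hσ, hxy⟩ := hE
  exact hne (eq_of_finPerm_le hσ hxy hle)

lemma Dom_trans {a b c : Quotient (ES S)} (h1 : Dom a b) (h2 : Dom b c) : Dom a c := by
  obtain ⟨x, y, hx, hy, hleyx, hnexy⟩ := h1
  obtain ⟨y', z, hy', hz, hlezy', hneyz⟩ := h2
  rw [← hy] at hy'
  have hE : E y y' := E_symm (Quotient.exact hy')
  obtain ⟨σ, hσ, hyy'⟩ := hE
  refine ⟨x ∘ σ, z, ?_, hz, ?_, ?_⟩
  · rw [← hx]
    exact Quotient.sound (E_symm ⟨σ, hσ, rfl⟩)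
  · intro n
    calc (z n : ℝ) ≤ y' n := hlezy' n
    _ = y (σ n) := congrArg Subtype.val (congrFun hyy'.symm n)
    _ ≤ x (σ n) := hleyx (σ n)
  · intro h
    -- x ∘ σ = z, but z ≤ y' = y∘σ ≤ x∘σ = z forces z = y' then y∘σ = x∘σ then x = y
    have h1 : ∀ n, (z n : ℝ) = x (σ n) := fun n =>
      congrArg Subtype.val (congrFun h.symm n)
    have h2 : ∀ n, z n = y' n := by
      intro n
      refine Subtype.ext (le_antisymm (hlezy' n) ?_)
      have hth : (y' n : ℝ) = y (σ n) := congrArg Subtype.val (congrFun hyy'.symm n)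
      rw [hth, h1 n]
      exact hleyx (σ n)
    have hzy' : z = y' := funext h2
    rw [hzy', ← hyy'] at h
    apply hnexy
    set e := Equiv.ofBijective σ hσ.1 with he
    funext n
    have hcf := congrFun h (e.symm n)
    simp only [Function.comp_apply] at hcf
    have h4 : σ (e.symm n) = n := e.apply_symm_apply n
    rw [h4] at hcf
    exact hcf

/-- partial order on the quotient -/
def QLE (a b : Quotient (ES S)) : Prop := a = b ∨ Dom b a

instance QLE_partial (S : Set ℝ) : IsPartialOrder (Quotient (ES S)) QLE where
  refl a := Or.inl rfl
  trans a b c h1 h2 := by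
    rcases h1 with rfl | h1
    · exact h2
    rcases h2 with rfl | h2
    · exact Or.inr h1
    · exact Or.inr (Dom_trans h2 h1)
  antisymm a b h1 h2 := by
    rcases h1 with rfl | h1
    · rfl
    rcases h2 with rfl | h2
    · rfl
    · exact absurd (Dom_trans h1 h2) (Dom_irrefl b)

end FinPermAux

open FinPermAux in
/-- For every Borel set `S ⊆ ℝ` there is a complete and transitive relation on `S^ℕ`
satisfying strict Pareto and intergenerational equity whose symmetric part is exactly the
relation "equal up to a finite permutation". -/
theorem exists_equitable_paretian_order_on_borel_set
    (S : Set ℝ) (hS : MeasurableSet S) :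
    ∃ R : (ℕ → S) → (ℕ → S) → Prop,
      Total R ∧ Transitive R ∧
      (∀ x y : ℕ → S, (∀ n, (y n : ℝ) ≤ x n) → x ≠ y → (R x y ∧ ¬ R y x)) ∧
      (∀ (x : ℕ → S) (σ : ℕ → ℕ), IsFinPerm σ → (R x (x ∘ σ) ∧ R (x ∘ σ) x)) ∧
      (∀ x y : ℕ → S, (R x y ∧ R y x) ↔ ∃ σ : ℕ → ℕ, IsFinPerm σ ∧ x ∘ σ = y) := by
  obtain ⟨s, hs_lin, hs_ext⟩ := extend_partialOrder (QLE (S := S))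
  haveI := hs_lin
  set q : (ℕ → S) → Quotient (ES S) := Quotient.mk (ES S) with hq
  refine ⟨fun x y => s (q y) (q x), ?_, ?_, ?_, ?_, ?_⟩
  · intro x y
    exact total_of s (q y) (q x)
  · intro x y z h1 h2
    exact _root_.trans_of s h2 h1
  · intro x y hle hne
    have hdom : Dom (q x) (q y) := ⟨x, y, rfl, rfl, hle, hne⟩
    constructor
    · exact hs_ext _ _ (Or.inr hdom)
    · intro hcon
      have h1 : s (q y) (q x) := hs_ext _ _ (Or.inr hdom)
      have : q x = q y := antisymm_of s hcon h1
      exact Dom_irrefl (q y) (this ▸ hdom)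
  · intro x σ hσ
    have heqc : q x = q (x ∘ σ) := Quotient.sound ⟨σ, hσ, rfl⟩
    constructor
    · show s (q (x ∘ σ)) (q x)
      rw [← heqc]
      exact refl_of s (q x)
    · show s (q x) (q (x ∘ σ))
      rw [← heqc]
      exact refl_of s (q x)
  · intro x y
    constructor
    · rintro ⟨h1, h2⟩
      have : q y = q x := antisymm_of s h1 h2
      exact Quotient.exact this.symm
    · rintro ⟨σ, hσ, hxy⟩
      have heqc : q x = q y := Quotient.sound ⟨σ, hσ, hxy⟩
      constructor
      · show s (q y) (q x)
        rw [heqc]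
        exact refl_of s (q y)
      · show s (q x) (q y)
        rw [heqc]
        exact refl_of s (q y)
end
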